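/- arXiv:1609.00994 — 4 statements merged into one kernel-verified Lean document; each statement's English description precedes it below -/
import Mathlib

section
/- Let A be a finite-dimensional algebra over a field k, T an algebra endomorphism of A, x an element of the Jacobson radical J(A), and a any element of A. Then the linear operator on A given by v ↦ x · T(v) · a is nilpotent. -/
/-!
Iterating `v ↦ x * T v * a` gives `Fⁿ v = yₙ * Tⁿ v * zₙ` with `yₙ = x * T x * ⋯ * Tⁿ⁻¹ x`, so it
suffices that some `yₙ` vanishes. The ranges of the powers of `T` stabilise at a subalgebra `S`,
and from then on every `Tᵐ⁺ⁱ` maps `A` onto `S`. Surjections carry the Jacobson radical into the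
Jacobson radical, so `Tᵐ (y_N) = Tᵐ x * Tᵐ⁺¹ x * ⋯` is a product of `N` elements of `J(S)`, which
is nilpotent because `S` is Artinian. Hence `y_{m+N} = yₘ * Tᵐ (y_N) = 0`.
-/

open Ideal

theorem Ideal.map_mem_jacobson_bot_of_surjective {R S F : Type*} [Ring R] [Ring S] [FunLike F R S]
    [RingHomClass F R S] {f : F} (hf : Function.Surjective f) {x : R}
    (hx : x ∈ jacobson (⊥ : Ideal R)) : f x ∈ jacobson (⊥ : Ideal S) := by
  have : RingHomSurjective (f : R →+* S) := ⟨hf⟩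
  rw [jacobson_bot] at hx ⊢
  exact Ring.le_comap_jacobson (f : R →+* S) hx

theorem Subalgebra.isArtinianRing_of_isArtinian {R A : Type*} [CommRing R] [Ring A] [Algebra R A]
    [IsArtinian R A] (S : Subalgebra R A) : IsArtinianRing S :=
  have : IsArtinian R S := isArtinian_of_injective S.val.toLinearMap Subtype.val_injective
  isArtinian_of_tower R inferInstance

namespace AlgHom

variable {R A : Type*} [CommRing R] [Ring A] [Algebra R A]

theorem exists_range_pow_eq [IsArtinian R A] (T : A →ₐ[R] A) :
    ∃ m, ∀ n, m ≤ n → (T ^ n).range = (T ^ m).range := by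
  have range_antitone : ∀ m n, m ≤ n → (T ^ n).range ≤ (T ^ m).range := by
    intro m n hmn
    obtain ⟨d, rfl⟩ := Nat.exists_eq_add_of_le hmn
    rw [pow_add]
    exact range_comp_le_range _ _
  obtain ⟨m, hm⟩ := IsArtinian.monotone_stabilizes
    ⟨fun n => OrderDual.toDual (Subalgebra.toSubmodule (T ^ n).range),
      fun _ _ h => Subalgebra.toSubmodule.monotone (range_antitone _ _ h)⟩
  exact ⟨m, fun n hn => Subalgebra.toSubmodule_injective (hm n hn).symm⟩

/-- `twistedPow T x n = x * T x * T² x * ⋯ * Tⁿ⁻¹ x`. -/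
def twistedPow (T : A →ₐ[R] A) (x : A) : ℕ → A
  | 0 => 1
  | n + 1 => x * T (twistedPow T x n)

variable (T : A →ₐ[R] A) (x : A)

@[simp] theorem twistedPow_zero : twistedPow T x 0 = 1 := rfl

theorem twistedPow_succ (n : ℕ) : twistedPow T x (n + 1) = x * T (twistedPow T x n) := rfl

theorem twistedPow_add (p q : ℕ) :
    twistedPow T x (p + q) = twistedPow T x p * (T ^ p) (twistedPow T x q) := by
  induction p with
  | zero => simp
  | succ p ih =>
    rw [Nat.add_right_comm, twistedPow_succ, ih, map_mul, ← mul_assoc, ← twistedPow_succ,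
      pow_succ', mul_apply]

theorem twistedPow_dvd_mulLeft_mulRight_comp_pow_apply (a : A) (n : ℕ) (v : A) :
    twistedPow T x n ∣
      ((LinearMap.mulLeft R x ∘ₗ LinearMap.mulRight R a ∘ₗ T.toLinearMap) ^ n) v := by
  induction n with
  | zero => exact ⟨v, by simp⟩
  | succ n ih =>
    obtain ⟨w, hw⟩ := ih
    refine ⟨T w * a, ?_⟩
    rw [pow_succ', Module.End.mul_apply, hw, twistedPow_succ]
    simp [mul_assoc]

theorem exists_twistedPow_eq_zero [IsArtinian R A] (hx : x ∈ jacobson (⊥ : Ideal A)) :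
    ∃ n, twistedPow T x n = 0 := by
  obtain ⟨m, hm⟩ := T.exists_range_pow_eq
  set S := (T ^ m).range
  have : IsArtinianRing S := S.isArtinianRing_of_isArtinian
  let f (i : ℕ) : A →ₐ[R] S :=
    (T ^ (m + i)).codRestrict S fun v => hm _ le_self_add ▸ mem_range_self _ v
  have f_surjective (i : ℕ) : Function.Surjective (f i) := by
    rintro ⟨s, hs⟩
    rw [← hm (m + i) le_self_add] at hs
    obtain ⟨v, rfl⟩ := hs
    exact ⟨v, rfl⟩
  have f_apply_apply (i : ℕ) (v : A) : f i (T v) = f (i + 1) v := by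
    ext; simp [f, ← add_assoc, pow_succ, mul_apply]
  have mem_jacobson_pow (q i : ℕ) : f i (twistedPow T x q) ∈ jacobson (⊥ : Ideal S) ^ q := by
    induction q generalizing i with
    | zero => rw [Submodule.pow_zero, one_eq_top]; exact Submodule.mem_top
    | succ q ih =>
      rw [twistedPow_succ, map_mul, f_apply_apply, IsTwoSided.pow_succ]
      exact mul_mem_mul (map_mem_jacobson_bot_of_surjective (f_surjective i) hx) (ih _)
  obtain ⟨N, hN⟩ := IsArtinianRing.isNilpotent_jacobson_bot (R := S)
  have : f 0 (twistedPow T x N) = 0 := by simpa [hN] using mem_jacobson_pow N 0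
  refine ⟨m + N, ?_⟩
  rw [twistedPow_add, show (T ^ m) (twistedPow T x N) = f 0 (twistedPow T x N) from rfl, this,
    ZeroMemClass.coe_zero, mul_zero]

end AlgHom

/-- Let `A` be a finite-dimensional algebra over a field `k`, `T` an algebra endomorphism of
`A`, `x ∈ J(A)`, and `a ∈ A`.  Then the linear operator `l(x) ∘ r(a) ∘ T : v ↦ x * T v * a`
is nilpotent. -/
theorem trace_aux_endo_left_nilpotent
    {k A : Type*} [Field k] [Ring A] [Algebra k A] [FiniteDimensional k A]
    (T : A →ₐ[k] A) (x : A) (hx : x ∈ Ideal.jacobson (⊥ : Ideal A)) (a : A) :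
    IsNilpotent
      ((LinearMap.mulLeft k x) ∘ₗ (LinearMap.mulRight k a) ∘ₗ T.toLinearMap) := by
  obtain ⟨n, hn⟩ := T.exists_twistedPow_eq_zero x hx
  refine ⟨n, LinearMap.ext fun v => ?_⟩
  have := T.twistedPow_dvd_mulLeft_mulRight_comp_pow_apply x a n v
  rwa [hn, zero_dvd_iff] at this
end

section
/- Let A be a finite-dimensional algebra over a field k, T an algebra anti-endomorphism of A, x ∈ J(A), and a ∈ A. Then the linear operator on A given by v ↦ a · T(v) · x is nilpotent. -/
/-!
By Fitting's lemma choose `n ≥ 1` with `A = ker Tⁿ ⊕ range Tⁿ`. Then `K = ker Tⁿ` is a two-sided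
ideal with `T K ⊆ K`, and `T` induces a surjective anti-endomorphism of the Artinian ring `A ⧸ K`.
The Jacobson radical of an Artinian ring consists of the `z` with `y * z` nilpotent for all `y`,
a condition such a map preserves; hence `T` maps `I = jacobson K` into itself. The operator
`S v = a * T v * x` therefore maps `I ^ m` into `I ^ (m + 1)`, and since `I ^ m ⊆ K` for large
`m`, a power of `S` maps `A` into `K`. Finally `Sⁿ v = L * Tⁿ v * R` for some `L` and `R`, so
`Sⁿ` vanishes on `K`.
-/

open LinearMap

namespace Ideal

variable {R S : Type*} [Ring R] [Ring S]

theorem pow_le_comap_pow {f : R →+* S} {I : Ideal R} {J : Ideal S} (h : I ≤ J.comap f) :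
    ∀ m : ℕ, I ^ m ≤ (J ^ m).comap f
  | 0 => by simp [Submodule.pow_zero]
  | m + 1 => by
    rw [Submodule.pow_succ, mul_le]
    intro r hr s hs
    rw [mem_comap, map_mul, Submodule.pow_succ]
    exact mul_mem_mul (pow_le_comap_pow h m hr) (h hs)

theorem comap_mk_jacobson_bot (K : Ideal R) [K.IsTwoSided] :
    (⊥ : Ideal (R ⧸ K)).jacobson.comap (Quotient.mk K) = K.jacobson := by
  rw [comap_jacobson_of_surjective Quotient.mk_surjective, ← RingHom.ker_eq_comap_bot, mk_ker]

theorem exists_jacobson_pow_le (K : Ideal R) [K.IsTwoSided] [IsArtinianRing (R ⧸ K)] :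
    ∃ n : ℕ, K.jacobson ^ n ≤ K := by
  obtain ⟨n, hn⟩ := IsArtinianRing.isNilpotent_jacobson_bot (R := R ⧸ K)
  refine ⟨n, ?_⟩
  have := pow_le_comap_pow (comap_mk_jacobson_bot K).ge n
  rwa [hn, zero_eq_bot, ← RingHom.ker_eq_comap_bot, mk_ker] at this

theorem mem_jacobson_bot_iff_forall_isNilpotent_mul [IsArtinianRing R] {z : R} :
    z ∈ (⊥ : Ideal R).jacobson ↔ ∀ y, IsNilpotent (y * z) := by
  refine ⟨fun hz y => ?_, fun h => mem_jacobson_iff.2 fun y => ?_⟩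
  · obtain ⟨n, hn⟩ := IsArtinianRing.isNilpotent_jacobson_bot (R := R)
    refine ⟨n, ?_⟩
    have := pow_mem_pow (mul_mem_left _ y hz) n
    rwa [hn, zero_eq_bot, mem_bot] at this
  · obtain ⟨w, hw⟩ := isUnit_iff_exists_inv'.1 (h y).isUnit_add_one
    refine ⟨w, ?_⟩
    rw [mem_bot, ← hw]
    noncomm_ring

theorem mem_jacobson_iff_forall_isNilpotent_mk (K : Ideal R) [K.IsTwoSided]
    [IsArtinianRing (R ⧸ K)] {z : R} :
    z ∈ K.jacobson ↔ ∀ y, IsNilpotent (Quotient.mk K (y * z)) := by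
  rw [← comap_mk_jacobson_bot, mem_comap, mem_jacobson_bot_iff_forall_isNilpotent_mul,
    Quotient.mk_surjective.forall]
  simp only [map_mul]

end Ideal

section AntiMultiplicative

variable {R : Type*} [Ring R] {F : Type*} [FunLike F R R]

theorem map_pow_succ_of_antimul {T : R → R} (hT : ∀ u v, T (u * v) = T v * T u) (u : R) :
    ∀ n : ℕ, T (u ^ (n + 1)) = T u ^ (n + 1)
  | 0 => by simp
  | n + 1 => by rw [pow_succ' u, hT, map_pow_succ_of_antimul hT u n, ← pow_succ]

theorem map_mem_pow_of_antimul [AddMonoidHomClass F R R] {T : F}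
    (hT : ∀ u v, T (u * v) = T v * T u) {I : Ideal R} [I.IsTwoSided]
    (hTI : ∀ z ∈ I, T z ∈ I) : ∀ (m : ℕ), ∀ z ∈ I ^ m, T z ∈ I ^ m
  | 0, _, _ => by simp [Submodule.pow_zero]
  | m + 1, z, hz => by
    rw [Submodule.pow_succ] at hz
    refine Submodule.smul_induction_on hz (fun r hr s hs => ?_) (fun u v hu hv => ?_)
    · rw [smul_eq_mul, hT, Ideal.IsTwoSided.pow_succ]
      exact Ideal.mul_mem_mul (hTI s hs) (map_mem_pow_of_antimul hT hTI m r hr)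
    · rw [map_add]
      exact add_mem hu hv

theorem Ideal.map_mem_jacobson_of_antimul {K : Ideal R} [K.IsTwoSided] [IsArtinianRing (R ⧸ K)]
    {T : R → R} (hT : ∀ u v, T (u * v) = T v * T u) (hTK : ∀ z ∈ K, T z ∈ K)
    (hsurj : ∀ y, ∃ u, T u - y ∈ K) {z : R} (hz : z ∈ K.jacobson) : T z ∈ K.jacobson := by
  rw [Ideal.mem_jacobson_iff_forall_isNilpotent_mk]
  intro y
  obtain ⟨u, hu⟩ := hsurj y
  obtain ⟨n, hn⟩ := (Ideal.mem_jacobson_iff_forall_isNilpotent_mk K).1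
    (K.jacobson.mul_mem_right u hz) 1
  have hy : Ideal.Quotient.mk K y = Ideal.Quotient.mk K (T u) := (Ideal.Quotient.eq.2 hu).symm
  refine ⟨n + 1, ?_⟩
  rw [map_mul, hy, ← map_mul, ← hT, ← map_pow, ← map_pow_succ_of_antimul hT,
    Ideal.Quotient.eq_zero_iff_mem]
  refine hTK _ (Ideal.Quotient.eq_zero_iff_mem.1 ?_)
  rw [one_mul] at hn
  rw [map_pow, pow_succ, hn, zero_mul]

end AntiMultiplicative

section Sandwich

variable {k A : Type*} [CommRing k] [Ring A] [Algebra k A] {T : A →ₗ[k] A}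

theorem pow_apply_mul_eq_zero_of_antimul (hT : ∀ u v, T (u * v) = T v * T u) :
    ∀ (n : ℕ) {u : A}, (T ^ n) u = 0 → ∀ v, (T ^ n) (u * v) = 0 ∧ (T ^ n) (v * u) = 0
  | 0, u, hu, v => by simp_all
  | n + 1, u, hu, v => by
    rw [pow_succ, Module.End.mul_apply] at hu
    simp only [pow_succ, Module.End.mul_apply, hT]
    exact ⟨(pow_apply_mul_eq_zero_of_antimul hT n hu _).2,
      (pow_apply_mul_eq_zero_of_antimul hT n hu _).1⟩

variable (T) in
def kerPowIdeal (hT : ∀ u v, T (u * v) = T v * T u) (n : ℕ) : Ideal A :=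
  (TwoSidedIdeal.mk' (LinearMap.ker (T ^ n)) (zero_mem _) add_mem neg_mem
    (fun hy => (pow_apply_mul_eq_zero_of_antimul hT n hy _).2)
    (fun hx => (pow_apply_mul_eq_zero_of_antimul hT n hx _).1)).asIdeal

instance (hT : ∀ u v, T (u * v) = T v * T u) (n : ℕ) : (kerPowIdeal T hT n).IsTwoSided :=
  inferInstanceAs (TwoSidedIdeal.asIdeal _).IsTwoSided

theorem mem_kerPowIdeal (hT : ∀ u v, T (u * v) = T v * T u) {n : ℕ} {z : A} :
    z ∈ kerPowIdeal T hT n ↔ (T ^ n) z = 0 := by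
  rw [kerPowIdeal, TwoSidedIdeal.mem_asIdeal]
  exact TwoSidedIdeal.mem_mk' _ _ _ _ _ _ z

theorem map_mem_kerPowIdeal (hT : ∀ u v, T (u * v) = T v * T u) {n : ℕ} {z : A}
    (hz : z ∈ kerPowIdeal T hT n) : T z ∈ kerPowIdeal T hT n := by
  rw [mem_kerPowIdeal] at hz ⊢
  rw [← Module.End.mul_apply, ← pow_succ, pow_succ', Module.End.mul_apply, hz, map_zero]

theorem exists_apply_sub_mem_kerPowIdeal (hT : ∀ u v, T (u * v) = T v * T u) {n : ℕ}
    (hcod : Codisjoint (LinearMap.ker (T ^ (n + 1))) (LinearMap.range (T ^ (n + 1)))) (y : A) :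
    ∃ u, T u - y ∈ kerPowIdeal T hT (n + 1) := by
  obtain ⟨z, hz, _, ⟨w, rfl⟩, rfl⟩ :=
    Submodule.mem_sup.1 (hcod.eq_top ▸ Submodule.mem_top (x := y))
  refine ⟨(T ^ n) w, ?_⟩
  rw [← Module.End.mul_apply, ← pow_succ', sub_add_cancel_right]
  exact neg_mem ((mem_kerPowIdeal hT).2 hz)

theorem exists_sandwich_pow_apply_eq (hT : ∀ u v, T (u * v) = T v * T u) (a x : A) :
    ∀ (n : ℕ) (v : A), ∃ L R : A,
      ((mulLeft k a ∘ₗ mulRight k x ∘ₗ T) ^ n) v = L * (T ^ n) v * R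
  | 0, v => ⟨1, 1, by simp⟩
  | n + 1, v => by
    obtain ⟨L, R, h⟩ := exists_sandwich_pow_apply_eq hT a x n v
    refine ⟨a * T R, T L * x, ?_⟩
    simp only [pow_succ', Module.End.mul_apply, h, comp_apply, mulLeft_apply, mulRight_apply, hT,
      mul_assoc]

theorem sandwich_pow_apply_mem_pow (hT : ∀ u v, T (u * v) = T v * T u) {I : Ideal A}
    [I.IsTwoSided] (hTI : ∀ z ∈ I, T z ∈ I) (a : A) {x : A} (hx : x ∈ I) :
    ∀ (m : ℕ) (v : A), ((mulLeft k a ∘ₗ mulRight k x ∘ₗ T) ^ m) v ∈ I ^ m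
  | 0, v => by simp [Submodule.pow_zero]
  | m + 1, v => by
    rw [pow_succ', Module.End.mul_apply, comp_apply, comp_apply, mulLeft_apply, mulRight_apply,
      Submodule.pow_succ]
    exact (I ^ m * I).mul_mem_left a (Ideal.mul_mem_mul
      (map_mem_pow_of_antimul hT hTI m _ (sandwich_pow_apply_mem_pow hT hTI a hx m v)) hx)

end Sandwich

/-- Let `A` be a finite-dimensional algebra over a field `k`, `T` an algebra
anti-endomorphism of `A` (a `k`-linear map with `T (u*v) = T v * T u`), `x ∈ J(A)`, and
`a ∈ A`.  Then the linear operator `l(a) ∘ r(x) ∘ T : v ↦ a * T v * x` is nilpotent. -/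
theorem trace_aux_antiendo_nilpotent
    {k A : Type*} [Field k] [Ring A] [Algebra k A] [FiniteDimensional k A]
    (T : A →ₗ[k] A) (hT : ∀ u v : A, T (u * v) = T v * T u)
    (x : A) (hx : x ∈ Ideal.jacobson (⊥ : Ideal A)) (a : A) :
    IsNilpotent ((LinearMap.mulLeft k a) ∘ₗ (LinearMap.mulRight k x) ∘ₗ T) := by
  have : IsArtinianRing A := IsArtinianRing.of_finite k A
  obtain ⟨N, hN⟩ := Filter.eventually_atTop.1 T.eventually_codisjoint_ker_pow_range_pow
  set K := kerPowIdeal T hT (N + 1)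
  have hTJ : ∀ z ∈ K.jacobson, T z ∈ K.jacobson := fun z =>
    Ideal.map_mem_jacobson_of_antimul hT (fun _ => map_mem_kerPowIdeal hT)
      (exists_apply_sub_mem_kerPowIdeal hT (hN (N + 1) N.le_succ))
  obtain ⟨m, hm⟩ := K.exists_jacobson_pow_le
  refine ⟨N + 1 + m, LinearMap.ext fun v => ?_⟩
  have hv := sandwich_pow_apply_mem_pow hT hTJ a (Ideal.jacobson_mono bot_le hx) m v
  obtain ⟨L, R, hLR⟩ := exists_sandwich_pow_apply_eq hT a x (N + 1)
    (((mulLeft k a ∘ₗ mulRight k x ∘ₗ T) ^ m) v)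
  rw [pow_add, Module.End.mul_apply, hLR, (mem_kerPowIdeal hT).1 (hm hv), mul_zero, zero_mul,
    LinearMap.zero_apply]
end

section
/- Let A be a finite-dimensional algebra over a field k and T an algebra endomorphism or anti-endomorphism of A. If a, a', b, b' ∈ A satisfy a' ∈ a + J(A) and b' ∈ b + J(A), then Tr(l(a) ∘ r(b) ∘ T) = Tr(l(a') ∘ r(b') ∘ T), where Tr denotes the trace of a k-linear endomorphism of A. -/
/-!
Cycling the trace, `Tr(l w ∘ r x ∘ T) = Tr(T ∘ l w ∘ r x) = Tr(l w' ∘ r x' ∘ T)` with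
`{w', x'} = {T w, T x}`, so `w, x` may be replaced by `E^r w, E^r x` for the multiplicative map
`E = T²`. Once the ranges of the powers of `E` have stabilised, every `E^m(J(A))` lies in the
Jacobson radical of the unital subalgebra `S` generated by the stable range: its left multiples
by `S` stay in `E^m(J(A))`, hence are nilpotent. Since `J(S)` is nilpotent, when `p` or `q` lies in
`J(A)` the square of `l(E^r p) ∘ r(E^r q) ∘ T`, which is `l c ∘ r d ∘ E` with `c` or `d` in
`E^r(J(A))`, is nilpotent, so its trace vanishes; the theorem follows by bilinearity.
-/

open LinearMap

section Multiplicative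

variable {R A : Type*} [Semiring R] [Semiring A] [Module R A] {E : Module.End R A}

theorem pow_apply_mul_of_map_mul (hE : ∀ u v, E (u * v) = E u * E v) (n : ℕ) (u v : A) :
    (E ^ n) (u * v) = (E ^ n) u * (E ^ n) v := by
  induction n with
  | zero => rfl
  | succ n ih => rw [pow_succ', Module.End.mul_apply, ih, hE]; rfl

theorem isNilpotent_apply_of_map_mul (hE : ∀ u v, E (u * v) = E u * E v) {x : A}
    (hx : IsNilpotent x) : IsNilpotent (E x) := by
  obtain ⟨n, hn⟩ := hx
  have hpow : ∀ m : ℕ, E (x ^ (m + 1)) = E x ^ (m + 1) := by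
    intro m
    induction m with
    | zero => simp
    | succ m ih => rw [pow_succ, hE, ih, ← pow_succ]
  exact ⟨n + 1, by rw [← hpow, pow_succ, hn, zero_mul, map_zero]⟩

end Multiplicative

theorem mem_jacobson_bot_of_forall_isNilpotent_mul {R : Type*} [Ring R] {x : R}
    (hx : ∀ y, IsNilpotent (y * x)) : x ∈ Ideal.jacobson (⊥ : Ideal R) := by
  refine Ideal.mem_jacobson_iff.2 fun y => ⟨↑(hx y).isUnit_add_one.unit⁻¹, ?_⟩
  rw [Ideal.mem_bot, mul_assoc, ← mul_add_one, Units.inv_mul_of_eq (by rfl), sub_self]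

section TwistedMultiplication

variable {k A : Type*} [CommSemiring k] [Semiring A] [Algebra k A]

theorem isNilpotent_mulLeft_comp_mulRight_comp {E : Module.End k A}
    (hE : ∀ u v, E (u * v) = E u * E v) {c d : A} {K L : Submodule k A}
    (hc : ∀ i, (E ^ i) c ∈ K) (hd : ∀ i, (E ^ i) d ∈ L) (hKL : IsNilpotent K ∨ IsNilpotent L) :
    IsNilpotent (mulLeft k c ∘ₗ mulRight k d ∘ₗ E) := by
  set M := mulLeft k c ∘ₗ mulRight k d ∘ₗ E
  have hpow : ∀ n v, ∃ x ∈ K ^ n, ∃ y ∈ L ^ n, (M ^ n) v = x * (E ^ n) v * y := by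
    intro n
    induction n with
    | zero => exact fun v => ⟨1, Submodule.one_le.1 le_rfl, 1, Submodule.one_le.1 le_rfl, by simp⟩
    | succ n ih =>
      intro v
      obtain ⟨x, hx, y, hy, hxy⟩ := ih (M v)
      refine ⟨x * (E ^ n) c, pow_succ K n ▸ Submodule.mul_mem_mul hx (hc n),
        (E ^ n) d * y, pow_succ' L n ▸ Submodule.mul_mem_mul (hd n) hy, ?_⟩
      rw [pow_succ, Module.End.mul_apply, hxy, pow_succ, Module.End.mul_apply]
      simp [M, pow_apply_mul_of_map_mul hE, mul_assoc]
  refine hKL.elim (fun ⟨N, hN⟩ => ⟨N, ?_⟩) (fun ⟨N, hN⟩ => ⟨N, ?_⟩) <;> ext v <;>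
    obtain ⟨x, hx, y, hy, hxy⟩ := hpow N v
  · rw [hN, Submodule.zero_eq_bot, Submodule.mem_bot] at hx
    simp [hxy, hx]
  · rw [hN, Submodule.zero_eq_bot, Submodule.mem_bot] at hy
    simp [hxy, hy]

theorem mulLeft_comp_mulRight_comp_sq {T : Module.End k A} {w x w' x' : A}
    (h : T ∘ₗ (mulLeft k w ∘ₗ mulRight k x) = (mulLeft k w' ∘ₗ mulRight k x') ∘ₗ T) :
    (mulLeft k w ∘ₗ mulRight k x ∘ₗ T) ^ 2 =
      mulLeft k (w * w') ∘ₗ mulRight k (x' * x) ∘ₗ T ^ 2 := by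
  ext v
  have hv := LinearMap.congr_fun h (T v)
  simp only [comp_apply, mulLeft_apply, mulRight_apply] at hv
  simp [sq, hv, mul_assoc]

theorem comp_mulLeft_comp_mulRight_of_map_mul {T : Module.End k A}
    (hT : ∀ u v, T (u * v) = T u * T v) (w x : A) :
    T ∘ₗ (mulLeft k w ∘ₗ mulRight k x) = (mulLeft k (T w) ∘ₗ mulRight k (T x)) ∘ₗ T := by
  ext v
  simp [hT]

theorem comp_mulLeft_comp_mulRight_of_map_mul_rev {T : Module.End k A}
    (hT : ∀ u v, T (u * v) = T v * T u) (w x : A) :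
    T ∘ₗ (mulLeft k w ∘ₗ mulRight k x) = (mulLeft k (T x) ∘ₗ mulRight k (T w)) ∘ₗ T := by
  ext v
  simp [hT, mul_assoc]

end TwistedMultiplication

theorem trace_comp_eq_of_comp_eq {R M : Type*} [CommRing R] [AddCommGroup M] [Module R M]
    [Module.Free R M] [Module.Finite R M] {T f g : Module.End R M} (h : T ∘ₗ f = g ∘ₗ T) :
    trace R M (f ∘ₗ T) = trace R M (g ∘ₗ T) := by
  rw [trace_comp_comm', h]

section Artinian

theorem isNilpotent_of_mem_jacobson_bot {R : Type*} [Ring R] [IsArtinianRing R] {x : R}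
    (hx : x ∈ Ideal.jacobson (⊥ : Ideal R)) : IsNilpotent x := by
  obtain ⟨n, hn⟩ := IsArtinianRing.isNilpotent_jacobson_bot (R := R)
  exact ⟨n, by simpa [hn] using Ideal.pow_mem_pow hx n⟩

variable {k A : Type*} [CommSemiring k] [Ring A] [Algebra k A] [IsArtinianRing A]

theorem isNilpotent_mul_pow_apply_of_mem_adjoin {E : Module.End k A}
    (hE : ∀ u v, E (u * v) = E u * E v) {m : ℕ} {y j : A}
    (hy : y ∈ Algebra.adjoin k (range (E ^ m) : Set A)) (hj : j ∈ Ideal.jacobson (⊥ : Ideal A)) :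
    IsNilpotent (y * (E ^ m) j) := by
  set J := Ideal.jacobson (⊥ : Ideal A)
  suffices ∀ j ∈ J, ∃ j' ∈ J, y * (E ^ m) j = (E ^ m) j' by
    obtain ⟨j', hj', h⟩ := this j hj
    exact h ▸ isNilpotent_apply_of_map_mul (pow_apply_mul_of_map_mul hE m)
      (isNilpotent_of_mem_jacobson_bot hj')
  induction hy using Algebra.adjoin_induction with
  | mem z hz =>
    obtain ⟨u, rfl⟩ := hz
    exact fun j hj => ⟨u * j, J.mul_mem_left u hj, (pow_apply_mul_of_map_mul hE m u j).symm⟩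
  | algebraMap α =>
    exact fun j hj => ⟨α • j, J.smul_of_tower_mem α hj, by rw [map_smul, Algebra.smul_def]⟩
  | add z z' _ _ hz hz' =>
    intro j hj
    obtain ⟨u, hu, hzu⟩ := hz j hj
    obtain ⟨u', hu', hzu'⟩ := hz' j hj
    exact ⟨u + u', J.add_mem hu hu', by rw [add_mul, hzu, hzu', map_add]⟩
  | mul z z' _ _ hz hz' =>
    intro j hj
    obtain ⟨u', hu', hzu'⟩ := hz' j hj
    obtain ⟨u, hu, hzu⟩ := hz u' hu'
    exact ⟨u, hu, by rw [mul_assoc, hzu', hzu]⟩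

end Artinian

theorem exists_isNilpotent_submodule_forall_pow_apply_mem {k A : Type*} [Field k] [Ring A]
    [Algebra k A] [FiniteDimensional k A] {E : Module.End k A}
    (hE : ∀ u v, E (u * v) = E u * E v) :
    ∃ (K : Submodule k A) (r : ℕ), IsNilpotent K ∧
      ∀ m, r ≤ m → ∀ j ∈ Ideal.jacobson (⊥ : Ideal A), (E ^ m) j ∈ K := by
  have := IsArtinianRing.of_finite k A
  obtain ⟨r, hr⟩ := IsArtinian.monotone_stabilizes E.iterateRange
  set S := Algebra.adjoin k (range (E ^ r) : Set A)
  have := IsArtinianRing.of_finite k S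
  refine ⟨((Ideal.jacobson (⊥ : Ideal S)).restrictScalars k).map S.val.toLinearMap, r, ?_, ?_⟩
  · obtain ⟨N, hN⟩ := IsArtinianRing.isNilpotent_jacobson_bot (R := S)
    refine ⟨N + 1, ?_⟩
    rw [← Submodule.map_pow, ← Submodule.restrictScalars_pow N.add_one_ne_zero,
      Submodule.pow_succ, hN, zero_mul]
    simp
  · intro m hm j hj
    have hS : range (E ^ m) = range (E ^ r) := (hr m hm).symm
    have hjS : (E ^ m) j ∈ S := Algebra.subset_adjoin (hS ▸ mem_range_self _ j)
    refine ⟨⟨_, hjS⟩, mem_jacobson_bot_of_forall_isNilpotent_mul fun y => ?_, rfl⟩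
    refine (IsNilpotent.map_iff (F := S →ₐ[k] A) (f := S.val) Subtype.val_injective).1 ?_
    exact isNilpotent_mul_pow_apply_of_mem_adjoin hE (hS ▸ y.2) hj

section Trace

variable {k A : Type*} [Field k] [Ring A] [Algebra k A] [FiniteDimensional k A]
  {T : Module.End k A}

theorem trace_mulLeft_mulRight_comp_eq_pow_sq_apply
    (hT : (∀ u v : A, T (u * v) = T u * T v) ∨ (∀ u v : A, T (u * v) = T v * T u))
    (n : ℕ) (w x : A) :
    trace k A (mulLeft k w ∘ₗ mulRight k x ∘ₗ T) =
      trace k A (mulLeft k (((T ^ 2) ^ n) w) ∘ₗ mulRight k (((T ^ 2) ^ n) x) ∘ₗ T) := by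
  have step : ∀ w x, trace k A (mulLeft k w ∘ₗ mulRight k x ∘ₗ T) =
      trace k A (mulLeft k ((T ^ 2) w) ∘ₗ mulRight k ((T ^ 2) x) ∘ₗ T) := by
    intro w x
    simp only [← comp_assoc]
    rcases hT with hT | hT
    · rw [trace_comp_eq_of_comp_eq (comp_mulLeft_comp_mulRight_of_map_mul hT w x),
        trace_comp_eq_of_comp_eq (comp_mulLeft_comp_mulRight_of_map_mul hT _ _)]
      rfl
    · rw [trace_comp_eq_of_comp_eq (comp_mulLeft_comp_mulRight_of_map_mul_rev hT w x),
        trace_comp_eq_of_comp_eq (comp_mulLeft_comp_mulRight_of_map_mul_rev hT _ _)]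
      rfl
  induction n with
  | zero => rfl
  | succ n ih => rw [ih, step, ← Module.End.mul_apply, ← Module.End.mul_apply, ← pow_succ']

theorem trace_mulLeft_mulRight_comp_eq_zero
    (hT : (∀ u v : A, T (u * v) = T u * T v) ∨ (∀ u v : A, T (u * v) = T v * T u))
    {p q : A} (hpq : p ∈ Ideal.jacobson (⊥ : Ideal A) ∨ q ∈ Ideal.jacobson (⊥ : Ideal A)) :
    trace k A (mulLeft k p ∘ₗ mulRight k q ∘ₗ T) = 0 := by
  set J := Ideal.jacobson (⊥ : Ideal A)
  set E := T ^ 2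
  have hE : ∀ u v, E (u * v) = E u * E v := by
    rcases hT with hT | hT <;> intro u v <;> simp [E, sq, hT]
  obtain ⟨K, r, hK, hEK⟩ := exists_isNilpotent_submodule_forall_pow_apply_mem hE
  have hpowK : ∀ i, ∀ j ∈ J, (E ^ i) ((E ^ r) j) ∈ K := fun i j hj => by
    rw [← Module.End.mul_apply, ← pow_add]
    exact hEK _ (Nat.le_add_left r i) j hj
  have hTE : ∀ y, T ((E ^ r) y) = (E ^ r) (T y) :=
    LinearMap.congr_fun ((Commute.self_pow T 2).pow_right r).eq
  -- the shape of the square of the cycled operator, with `{s, t} = {T p, T q}`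
  have hsq : ∀ s t, IsNilpotent
      (mulLeft k ((E ^ r) (p * t)) ∘ₗ mulRight k ((E ^ r) (s * q)) ∘ₗ E) := by
    intro s t
    rcases hpq with hp | hq
    · exact isNilpotent_mulLeft_comp_mulRight_comp hE (L := ⊤)
        (fun i => hpowK i _ (J.mul_mem_right t hp)) (fun _ => Submodule.mem_top) (Or.inl hK)
    · exact isNilpotent_mulLeft_comp_mulRight_comp hE (K := ⊤)
        (fun _ => Submodule.mem_top) (fun i => hpowK i _ (J.mul_mem_left s hq)) (Or.inr hK)
  rw [trace_mulLeft_mulRight_comp_eq_pow_sq_apply hT r]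
  suffices IsNilpotent ((mulLeft k ((E ^ r) p) ∘ₗ mulRight k ((E ^ r) q) ∘ₗ T) ^ 2) from
    (isNilpotent_trace_of_isNilpotent this.of_pow).eq_zero
  rcases hT with hT | hT
  · rw [mulLeft_comp_mulRight_comp_sq (comp_mulLeft_comp_mulRight_of_map_mul hT _ _), hTE, hTE,
      ← pow_apply_mul_of_map_mul hE, ← pow_apply_mul_of_map_mul hE]
    exact hsq _ _
  · rw [mulLeft_comp_mulRight_comp_sq (comp_mulLeft_comp_mulRight_of_map_mul_rev hT _ _), hTE,
      hTE, ← pow_apply_mul_of_map_mul hE, ← pow_apply_mul_of_map_mul hE]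
    exact hsq _ _

end Trace

/-- Let `A` be a finite-dimensional algebra over a field `k` and `T` a `k`-linear map which is
either an algebra endomorphism or an algebra anti-endomorphism of `A`.  If `a' ∈ a + J(A)` and
`b' ∈ b + J(A)`, then `Tr(l(a) ∘ r(b) ∘ T) = Tr(l(a') ∘ r(b') ∘ T)`. -/
theorem trace_mulLeft_mulRight_congr_jacobson
    {k A : Type*} [Field k] [Ring A] [Algebra k A] [FiniteDimensional k A]
    (T : A →ₗ[k] A)
    (hT : (∀ u v : A, T (u * v) = T u * T v) ∨ (∀ u v : A, T (u * v) = T v * T u))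
    (a a' b b' : A)
    (ha : a' - a ∈ Ideal.jacobson (⊥ : Ideal A))
    (hb : b' - b ∈ Ideal.jacobson (⊥ : Ideal A)) :
    LinearMap.trace k A ((LinearMap.mulLeft k a) ∘ₗ (LinearMap.mulRight k b) ∘ₗ T) =
      LinearMap.trace k A ((LinearMap.mulLeft k a') ∘ₗ (LinearMap.mulRight k b') ∘ₗ T) := by
  calc trace k A (mulLeft k a ∘ₗ mulRight k b ∘ₗ T)
      = trace k A (mulLeft k a ∘ₗ mulRight k b ∘ₗ T)
        + trace k A (mulLeft k (a' - a) ∘ₗ mulRight k b' ∘ₗ T)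
        + trace k A (mulLeft k a ∘ₗ mulRight k (b' - b) ∘ₗ T) := by
        rw [trace_mulLeft_mulRight_comp_eq_zero hT (Or.inl ha),
          trace_mulLeft_mulRight_comp_eq_zero hT (Or.inr hb), add_zero, add_zero]
    _ = trace k A (mulLeft k a' ∘ₗ mulRight k b' ∘ₗ T) := by
        rw [← map_add, ← map_add]
        congr 1
        ext v
        simp only [LinearMap.add_apply, comp_apply, mulLeft_apply, mulRight_apply]
        noncomm_ring
end

section
/- Let H be a finite-dimensional Hopf algebra over a field k with antipode S, Λ a left integral of H, and λ a right integral of H* with λ(Λ) = 1. Then for all a ∈ H, Λ₍₁₎ ⊗ a Λ₍₂₎ = S(a) Λ₍₁₎ ⊗ Λ₍₂₎ in H ⊗ H (Sweedler notation with implicit summation). -/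
open TensorProduct

section Aux

variable {k H : Type*} [Field k] [Ring H] [HopfAlgebra k H]

local notation "ε" => Coalgebra.counit (R := k) (A := H)
local notation "Δ" => Coalgebra.comul (R := k) (A := H)
local notation "S" => HopfAlgebra.antipode (R := k) (A := H)

/-- `x ↦ S x ⊗ₜ 1`. -/
noncomputable def iotaS : H →ₗ[k] H ⊗[k] H :=
  ((TensorProduct.mk k H H).flip 1) ∘ₗ HopfAlgebra.antipode (R := k)

/-- `x ⊗ v ↦ (S x ⊗ₜ 1) * v`. -/
noncomputable def PhiS : H ⊗[k] (H ⊗[k] H) →ₗ[k] H ⊗[k] H :=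
  (LinearMap.mul' k (H ⊗[k] H)) ∘ₗ TensorProduct.map iotaS LinearMap.id

lemma PhiS_tmul (x : H) (v : H ⊗[k] H) :
    PhiS (x ⊗ₜ v) = ((S x) ⊗ₜ[k] (1 : H)) * v := by
  simp [PhiS, iotaS]

lemma PhiS_comp_assoc :
    (PhiS (k := k) (H := H)) ∘ₗ (TensorProduct.assoc k H H H).toLinearMap =
      LinearMap.rTensor H
        ((LinearMap.mul' k H) ∘ₗ (HopfAlgebra.antipode (R := k)).rTensor H) := by
  apply TensorProduct.ext
  apply TensorProduct.ext
  ext x z y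
  simp [PhiS, iotaS, Algebra.TensorProduct.tmul_mul_tmul]

/-- `∑ S(a₁) a₂ ⊗ a₃ = 1 ⊗ a`, as linear maps. -/
lemma PhiS_lTensor_comul :
    (PhiS (k := k) (H := H)) ∘ₗ (LinearMap.lTensor H Δ) ∘ₗ Δ =
      TensorProduct.mk k H H 1 := by
  rw [← Coalgebra.coassoc, ← LinearMap.comp_assoc, ← LinearMap.comp_assoc,
    PhiS_comp_assoc, LinearMap.comp_assoc, ← LinearMap.comp_assoc _ _
      (LinearMap.rTensor H _), ← LinearMap.rTensor_comp, LinearMap.comp_assoc,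
    HopfAlgebra.mul_antipode_rTensor_comul]
  ext a
  simp [LinearMap.rTensor_comp]

end Aux

/-- Let `H` be a finite-dimensional Hopf algebra over a field `k` with antipode `S`, `Λ` a
left integral of `H`, and `λ` a right integral of `H^*` with `λ(Λ) = 1`.  Then for all
`a ∈ H`, `Λ₁ ⊗ a Λ₂ = S(a) Λ₁ ⊗ Λ₂` in `H ⊗ H` (Sweedler notation). -/
theorem left_integral_comul_identity
    {k H : Type*} [Field k] [Ring H] [HopfAlgebra k H] [FiniteDimensional k H]
    (Λ : H) (hΛ : ∀ h : H, h * Λ = Coalgebra.counit (R := k) h • Λ)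
    (lam : H →ₗ[k] k)
    (hlam : ∀ f : H →ₗ[k] k,
      (LinearMap.mul' k k) ∘ₗ (TensorProduct.map f lam) ∘ₗ Coalgebra.comul = f 1 • lam)
    (hnorm : lam Λ = 1)
    (a : H) :
    TensorProduct.map LinearMap.id (LinearMap.mulLeft k a) (Coalgebra.comul (R := k) Λ) =
      TensorProduct.map
        (LinearMap.mulLeft k (HopfAlgebra.antipode (R := k) a)) LinearMap.id
        (Coalgebra.comul (R := k) Λ) := by
  set T : H ⊗[k] H := Coalgebra.comul (R := k) Λ with hT
  -- Rewrite both sides as multiplication in the algebra `H ⊗ H`.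
  have hL : TensorProduct.map LinearMap.id (LinearMap.mulLeft k a) T =
      ((1 : H) ⊗ₜ[k] a) * T := by
    induction T using TensorProduct.induction_on with
    | zero => simp
    | tmul x y => simp [Algebra.TensorProduct.tmul_mul_tmul]
    | add u v hu hv => simp [hu, hv, mul_add]
  have hR : TensorProduct.map
      (LinearMap.mulLeft k (HopfAlgebra.antipode (R := k) a)) LinearMap.id T =
      ((HopfAlgebra.antipode (R := k) a) ⊗ₜ[k] (1 : H)) * T := by
    induction T using TensorProduct.induction_on with
    | zero => simp
    | tmul x y => simp [Algebra.TensorProduct.tmul_mul_tmul]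
    | add u v hu hv => simp [hu, hv, mul_add]
  rw [hL, hR]
  -- The key property of the left integral, at the level of `H ⊗ H`.
  have star : ∀ h : H, (Coalgebra.comul (R := k) h) * T =
      Coalgebra.counit (R := k) h • T := by
    intro h
    rw [hT, ← Bialgebra.comul_mul, hΛ h, map_smul]
  -- A finite representation of `comul a`.
  obtain ⟨s, hs⟩ := TensorProduct.exists_finset (Coalgebra.comul (R := k) a)
  -- `a = ∑ ε(p.2) • p.1`.
  have ha : a = ∑ p ∈ s, Coalgebra.counit (R := k) p.2 • p.1 := by
    have h1 := Coalgebra.lTensor_counit_comul (R := k) a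
    rw [hs, map_sum] at h1
    have h2 := congrArg (TensorProduct.rid k H) h1
    simpa [map_sum, TensorProduct.smul_tmul'] using h2.symm
  -- `1 ⊗ a = ∑ (S p.1 ⊗ 1) * comul p.2`.
  have key : ((1 : H) ⊗ₜ[k] a) =
      ∑ p ∈ s, ((HopfAlgebra.antipode (R := k) p.1) ⊗ₜ[k] (1 : H)) *
        Coalgebra.comul (R := k) p.2 := by
    have := congrFun (congrArg DFunLike.coe (PhiS_lTensor_comul (k := k) (H := H))) a
    simp only [LinearMap.coe_comp, Function.comp_apply] at this
    rw [hs, map_sum] at this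
    simp only [LinearMap.lTensor_tmul, LinearMap.id_coe, id_eq,
      TensorProduct.mk_apply] at this
    rw [← this, map_sum]
    refine Finset.sum_congr rfl fun p _ => ?_
    rw [PhiS_tmul]
  calc ((1 : H) ⊗ₜ[k] a) * T
      = (∑ p ∈ s, ((HopfAlgebra.antipode (R := k) p.1) ⊗ₜ[k] (1 : H)) *
          Coalgebra.comul (R := k) p.2) * T := by rw [key]
    _ = ∑ p ∈ s, ((HopfAlgebra.antipode (R := k) p.1) ⊗ₜ[k] (1 : H)) *
          ((Coalgebra.comul (R := k) p.2) * T) := by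
        rw [Finset.sum_mul]; simp [mul_assoc]
    _ = ∑ p ∈ s, ((HopfAlgebra.antipode (R := k) p.1) ⊗ₜ[k] (1 : H)) *
          (Coalgebra.counit (R := k) p.2 • T) := by
        refine Finset.sum_congr rfl fun p _ => ?_; rw [star]
    _ = (∑ p ∈ s, Coalgebra.counit (R := k) p.2 •
          ((HopfAlgebra.antipode (R := k) p.1) ⊗ₜ[k] (1 : H))) * T := by
        rw [Finset.sum_mul]
        refine Finset.sum_congr rfl fun p _ => ?_
        rw [mul_smul_comm, smul_mul_assoc]
    _ = ((HopfAlgebra.antipode (R := k) a) ⊗ₜ[k] (1 : H)) * T := by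
        congr 1
        rw [ha, map_sum]
        simp [TensorProduct.smul_tmul', TensorProduct.sum_tmul]
end
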